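/- Fix ω₁, ω₂ ∈ ℂ∖{0} with Im(ω₁/ω₂) > 0, set q = exp(πiω₁/ω₂), q̃ = exp(πiω₂/ω₁), let g > 0 be a real number and write g^w := exp(w·ln g) for w ∈ ℂ. Let 𝒮(z) = (∏_{m=0}^∞ (1 − q^{2m}·e^{2πiz/ω₂})) / (∏_{m=1}^∞ (1 − q̃^{−2m}·e^{2πiz/ω₁})), and define the Whittaker vector Φ⁰(t) = 𝒮(−it + ω₁ + ω₂ − (iω₁ω₂/(2π))·ln g). Then for every t ∈ ℂ at which the denominators of the defining products of 𝒮 at the three arguments involved are nonvanishing, Φ⁰ satisfies the pair of dual difference equations: Φ⁰(t − iω₁) = (1 − g^{ω₁}·e^{2πt/ω₂})·Φ⁰(t) and Φ⁰(t − iω₂) = (1 − g^{ω₂}·e^{2πt/ω₁})·Φ⁰(t). -/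

import Mathlib

/-! Write `𝐞[ω] z = exp(2πiz/ω)`. The numerator of `𝒮` depends on `z` only through `𝐞[ω₂] z`
and the denominator only through `𝐞[ω₁] z`, and both are products `P(r, x) = ∏ₘ (1 - rᵐx)` with
`‖r‖ < 1`, which satisfy `P(r, x) = (1 - x) P(r, rx)`. Replacing `z` by `z - ω₁` fixes `𝐞[ω₁] z`
and divides `𝐞[ω₂] z` by `q²`, so it peels one factor off the numerator; replacing `z` by
`z - ω₂` does the same to the denominator with `q̃⁻²`, where the peeled factor has to be nonzero.
On `Φ⁰` the shift `t ↦ t - iωⱼ` is exactly `z ↦ z - ωⱼ`, and the peeled factor is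
`1 - g^{ωⱼ} e^{2πt/ωₖ}`. -/

/-- `qparam ω₁ ω₂ = exp(πi·ω₁/ω₂)`; then `q = qparam ω₁ ω₂` and
`q̃ = qparam ω₂ ω₁`. -/
noncomputable def qparam (ω₁ ω₂ : ℂ) : ℂ :=
  Complex.exp ((Real.pi : ℂ) * Complex.I * ω₁ / ω₂)

/-- The function `𝒮(z) = ∏_{m≥0}(1 − q^{2m}·e^{2πiz/ω₂}) / ∏_{m≥1}(1 − q̃^{−2m}·e^{2πiz/ω₁})`. -/
noncomputable def Sfun (ω₁ ω₂ z : ℂ) : ℂ :=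
  (∏' m : ℕ, (1 - qparam ω₁ ω₂ ^ (2 * m) *
      Complex.exp (2 * (Real.pi : ℂ) * Complex.I * z / ω₂))) /
  (∏' m : ℕ, (1 - qparam ω₂ ω₁ ^ (-(2 * ((m : ℤ) + 1))) *
      Complex.exp (2 * (Real.pi : ℂ) * Complex.I * z / ω₁)))

/-- The argument of `𝒮` in the Whittaker vector `Φ⁰`:
`−it + ω₁ + ω₂ − (iω₁ω₂/(2π))·ln g`. -/
noncomputable def phi0Arg (ω₁ ω₂ : ℂ) (g : ℝ) (t : ℂ) : ℂ :=
  -(Complex.I * t) + ω₁ + ω₂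
    - Complex.I * ω₁ * ω₂ / (2 * (Real.pi : ℂ)) * (Real.log g : ℂ)

/-- The Whittaker vector `Φ⁰(t) = 𝒮(−it + ω₁ + ω₂ − (iω₁ω₂/(2π))·ln g)`. -/
noncomputable def Phi0 (ω₁ ω₂ : ℂ) (g : ℝ) (t : ℂ) : ℂ :=
  Sfun ω₁ ω₂ (phi0Arg ω₁ ω₂ g t)

/-- The denominator factors of `𝒮` are nonvanishing at `z`. -/
def SdenNeZero (ω₁ ω₂ z : ℂ) : Prop :=
  ∀ m : ℕ, 1 ≤ m →
    1 - qparam ω₂ ω₁ ^ (-(2 * (m : ℤ))) *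
      Complex.exp (2 * (Real.pi : ℂ) * Complex.I * z / ω₁) ≠ 0

open Complex

local notation:max "𝐞[" ω "]" z:max => Complex.exp (2 * (Real.pi : ℂ) * Complex.I * z / ω)

section InfiniteProduct

variable {R : Type*} [NormedCommRing R] [NormOneClass R] [CompleteSpace R] {r : R}

theorem multipliable_one_sub_pow_mul (hr : ‖r‖ < 1) (x : R) :
    Multipliable fun m : ℕ ↦ 1 - r ^ m * x := by
  simp only [sub_eq_add_neg]
  refine multipliable_one_add_of_summable <|
    ((summable_geometric_of_lt_one (norm_nonneg r) hr).mul_right ‖x‖).of_nonneg_of_le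
      (fun _ ↦ norm_nonneg _) fun m ↦ ?_
  rw [norm_neg]
  exact (norm_mul_le _ _).trans (mul_le_mul_of_nonneg_right (norm_pow_le r m) (norm_nonneg x))

theorem tprod_one_sub_pow_mul (hr : ‖r‖ < 1) (x : R) :
    ∏' m : ℕ, (1 - r ^ m * x) = (1 - x) * ∏' m : ℕ, (1 - r ^ m * (r * x)) := by
  have hshift : (fun m : ℕ ↦ 1 - r ^ (m + 1) * x) = fun m ↦ 1 - r ^ m * (r * x) := by
    ext m; ring
  rw [tprod_eq_zero_mul' (by simpa only [hshift] using multipliable_one_sub_pow_mul hr (r * x)),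
    hshift, pow_zero, one_mul]

end InfiniteProduct

section PeriodicExp

variable {ω z w : ℂ}

theorem cexp_two_pi_I_sub_div : 𝐞[ω] (z - w) = 𝐞[ω] (-w) * 𝐞[ω] z := by
  rw [← Complex.exp_add]; ring_nf

theorem cexp_two_pi_I_sub_self_div (hω : ω ≠ 0) : 𝐞[ω] (z - ω) = 𝐞[ω] z := by
  rw [cexp_two_pi_I_sub_div, mul_neg, neg_div, mul_div_assoc, div_self hω, mul_one, Complex.exp_neg,
    Complex.exp_two_pi_mul_I, inv_one, one_mul]

theorem norm_cexp_two_pi_I_div_lt_one (h : 0 < (w / ω).im) : ‖𝐞[ω] w‖ < 1 := by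
  rw [Complex.norm_exp, Real.exp_lt_one_iff, mul_div_assoc]
  simp only [mul_re, mul_im, ofReal_re, ofReal_im, re_ofNat, im_ofNat, I_re, I_im]
  nlinarith [Real.pi_pos]

theorem im_neg_div_pos (h : 0 < (z / w).im) : 0 < (-w / z).im := by
  have hne : z / w ≠ 0 := fun h0 ↦ by simp [h0] at h
  rw [neg_div, ← inv_div, neg_im, inv_im, neg_div, neg_neg]
  exact div_pos h (normSq_pos.mpr hne)

end PeriodicExp

section Sfun

theorem qparam_sq (ω₁ ω₂ : ℂ) : qparam ω₁ ω₂ ^ 2 = 𝐞[ω₂] ω₁ := by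
  rw [qparam, ← Complex.exp_nat_mul]; ring_nf

theorem cexp_two_pi_I_neg_div_eq_inv_qparam_sq (ω₁ ω₂ : ℂ) :
    𝐞[ω₁] (-ω₂) = (qparam ω₂ ω₁ ^ 2)⁻¹ := by
  rw [qparam_sq, ← Complex.exp_neg]; ring_nf

theorem Sfun_eq (ω₁ ω₂ z : ℂ) :
    Sfun ω₁ ω₂ z = (∏' m : ℕ, (1 - (𝐞[ω₂] ω₁) ^ m * 𝐞[ω₂] z)) /
      ∏' m : ℕ, (1 - (𝐞[ω₁] (-ω₂)) ^ m * (𝐞[ω₁] (-ω₂) * 𝐞[ω₁] z)) := by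
  rw [Sfun]
  congr 1
  · exact tprod_congr fun m ↦ by rw [pow_mul, qparam_sq]
  · refine tprod_congr fun m ↦ ?_
    rw [← mul_assoc, ← pow_succ, cexp_two_pi_I_neg_div_eq_inv_qparam_sq, neg_mul_eq_mul_neg,
      zpow_mul, zpow_neg, ← inv_zpow, zpow_ofNat]
    norm_cast

variable {ω₁ ω₂ z : ℂ}

theorem SdenNeZero.one_sub_cexp_sub_ne_zero (h : SdenNeZero ω₁ ω₂ z) :
    1 - 𝐞[ω₁] (z - ω₂) ≠ 0 := by
  rw [cexp_two_pi_I_sub_div, cexp_two_pi_I_neg_div_eq_inv_qparam_sq]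
  simpa only [Nat.cast_one, mul_one, zpow_neg, zpow_ofNat] using h 1 le_rfl

theorem Sfun_sub_left (hω₁ : ω₁ ≠ 0) (him : 0 < (ω₁ / ω₂).im) :
    Sfun ω₁ ω₂ (z - ω₁) = (1 - 𝐞[ω₂] (z - ω₁)) * Sfun ω₁ ω₂ z := by
  have hshift : 𝐞[ω₂] ω₁ * 𝐞[ω₂] (z - ω₁) = 𝐞[ω₂] z := by
    rw [cexp_two_pi_I_sub_div (w := ω₁), ← mul_assoc, ← Complex.exp_add]
    ring_nf
    rw [Complex.exp_zero, one_mul]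
  rw [Sfun_eq, Sfun_eq, cexp_two_pi_I_sub_self_div hω₁,
    tprod_one_sub_pow_mul (norm_cexp_two_pi_I_div_lt_one him), hshift, mul_div_assoc]

theorem Sfun_sub_right (hω₂ : ω₂ ≠ 0) (him : 0 < (ω₁ / ω₂).im)
    (hden : 1 - 𝐞[ω₁] (z - ω₂) ≠ 0) :
    Sfun ω₁ ω₂ (z - ω₂) = (1 - 𝐞[ω₁] (z - ω₂)) * Sfun ω₁ ω₂ z := by
  rw [Sfun_eq, Sfun_eq, cexp_two_pi_I_sub_self_div hω₂,
    tprod_one_sub_pow_mul (norm_cexp_two_pi_I_div_lt_one (im_neg_div_pos him))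
      (𝐞[ω₁] (-ω₂) * 𝐞[ω₁] z), ← cexp_two_pi_I_sub_div (z := z), mul_div_assoc',
      mul_div_mul_left _ _ hden]

end Sfun

section Phi0

variable {ω₁ ω₂ : ℂ} (g : ℝ) (t : ℂ)

theorem phi0Arg_comm : phi0Arg ω₁ ω₂ g t = phi0Arg ω₂ ω₁ g t := by
  unfold phi0Arg; ring

theorem phi0Arg_sub_I_mul (ω : ℂ) : phi0Arg ω₁ ω₂ g (t - I * ω) = phi0Arg ω₁ ω₂ g t - ω := by
  unfold phi0Arg; linear_combination ω * I_sq

theorem cexp_phi0Arg_sub_left (hω₂ : ω₂ ≠ 0) :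
    𝐞[ω₂] (phi0Arg ω₁ ω₂ g t - ω₁) = exp (ω₁ * Real.log g) * exp (2 * Real.pi * t / ω₂) := by
  have hπ : (Real.pi : ℂ) ≠ 0 := ofReal_ne_zero.mpr Real.pi_ne_zero
  have harg : 2 * (Real.pi : ℂ) * I * (phi0Arg ω₁ ω₂ g t - ω₁) / ω₂
      = ω₁ * Real.log g + 2 * Real.pi * t / ω₂ + 2 * Real.pi * I := by
    unfold phi0Arg
    field_simp
    linear_combination (-(2 * (Real.pi : ℂ) * t) - ω₁ * ω₂ * Real.log g) * I_sq
  rw [harg, Complex.exp_add, Complex.exp_add, Complex.exp_two_pi_mul_I, mul_one]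

end Phi0

theorem whittaker_vector_Phi0_difference_equations
    (ω₁ ω₂ : ℂ) (hω₁ : ω₁ ≠ 0) (hω₂ : ω₂ ≠ 0) (him : 0 < (ω₁ / ω₂).im)
    (g : ℝ) (t : ℂ)
    (h1 : SdenNeZero ω₁ ω₂ (phi0Arg ω₁ ω₂ g t)) :
    Phi0 ω₁ ω₂ g (t - Complex.I * ω₁)
        = (1 - Complex.exp (ω₁ * (Real.log g : ℂ)) *
            Complex.exp (2 * (Real.pi : ℂ) * t / ω₂)) * Phi0 ω₁ ω₂ g t ∧
    Phi0 ω₁ ω₂ g (t - Complex.I * ω₂)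
        = (1 - Complex.exp (ω₂ * (Real.log g : ℂ)) *
            Complex.exp (2 * (Real.pi : ℂ) * t / ω₁)) * Phi0 ω₁ ω₂ g t := by
  have hexp₂ := cexp_phi0Arg_sub_left g t (ω₁ := ω₂) hω₁
  rw [← phi0Arg_comm] at hexp₂
  refine ⟨?_, ?_⟩
  · rw [Phi0, Phi0, phi0Arg_sub_I_mul, Sfun_sub_left hω₁ him, cexp_phi0Arg_sub_left g t hω₂]
  · rw [Phi0, Phi0, phi0Arg_sub_I_mul, Sfun_sub_right hω₂ him h1.one_sub_cexp_sub_ne_zero, hexp₂]
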